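/- arXiv:2506.16038 — 14 statements merged into one kernel-verified Lean document; each statement's English description precedes it below -/
import Mathlib

section
/- In the N-player Cournot oligopoly game, the symmetric profile x^N in which every player produces x^N = (a−c)/((N+1)·b) is a Nash equilibrium: for every player j, s_j(x^N, …, x^N) = (a−c)²/((N+1)²·b), and for every deviation y ∈ [0, x_max], the payoff of player j when player j plays y and all other players play x^N satisfies s_j(y, x^N_{−j}) ≤ (a−c)²/((N+1)²·b). -/
open Finset Function

/-- Payoff of player `j` in the `N`-player Cournot oligopoly game:
`s_j(x) = max(a − b·∑_k x_k, 0)·x_j − c·x_j`. -/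
noncomputable def cournotPayoff (N : ℕ) (a b c : ℝ) (x : Fin N → ℝ) (j : Fin N) : ℝ :=
  max (a - b * ∑ k, x k) 0 * x j - c * x j

/-- The symmetric profile where everybody produces `(a−c)/((N+1)b)` is a Nash
equilibrium with payoff `(a−c)²/((N+1)²b)` for each player. -/
theorem cournot_nash_equilibrium (N : ℕ) (hN : 2 ≤ N) (a b c xmax : ℝ)
    (hc : 0 < c) (hca : c < a) (hb : 0 < b) (hxmax : a / b ≤ xmax) (j : Fin N) :
    cournotPayoff N a b c (fun _ => (a - c) / (((N : ℝ) + 1) * b)) j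
      = (a - c) ^ 2 / (((N : ℝ) + 1) ^ 2 * b) ∧
    ∀ y ∈ Set.Icc (0 : ℝ) xmax,
      cournotPayoff N a b c
          (Function.update (fun _ => (a - c) / (((N : ℝ) + 1) * b)) j y) j
        ≤ (a - c) ^ 2 / (((N : ℝ) + 1) ^ 2 * b) := by
  have hN1 : (0:ℝ) < (N:ℝ) + 1 := by positivity
  have hNb : (((N:ℝ) + 1) * b) ≠ 0 := by positivity
  obtain ⟨t, ht⟩ : ∃ t : ℝ, t = (a - c) / (((N : ℝ) + 1) * b) := ⟨_, rfl⟩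
  rw [← ht]
  have hac : 0 < a - c := sub_pos.2 hca
  have ht0 : 0 < t := ht ▸ div_pos hac (by positivity)
  have htb : t * (((N:ℝ) + 1) * b) = a - c := by rw [ht]; exact div_mul_cancel₀ _ hNb
  have hRHS : (a - c) ^ 2 / (((N : ℝ) + 1) ^ 2 * b) = b * t ^ 2 := by
    rw [← htb]; field_simp
  have hsum : (∑ _k : Fin N, t) = (N:ℝ) * t := by
    rw [Finset.sum_const, card_univ, Fintype.card_fin, nsmul_eq_mul]
  constructor
  · unfold cournotPayoff
    rw [hsum]
    have hpos : a - b * ((N:ℝ) * t) = (a + (N:ℝ) * c) / ((N:ℝ) + 1) := by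
      rw [eq_div_iff hN1.ne']; linear_combination (-(N:ℝ)) * htb
    have hnn : (0:ℝ) ≤ (a + (N:ℝ) * c) / ((N:ℝ) + 1) :=
      le_of_lt (div_pos (by nlinarith) hN1)
    rw [hpos, max_eq_left hnn, hRHS]
    show (a + (N:ℝ) * c) / ((N:ℝ) + 1) * t - c * t = b * t ^ 2
    have hDc : (a + (N:ℝ) * c) / ((N:ℝ) + 1) - c = b * t := by
      rw [sub_eq_iff_eq_add, div_eq_iff hN1.ne']; linear_combination -htb
    linear_combination t * hDc
  · intro y hy
    obtain ⟨hy0, _⟩ := hy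
    have hsum2 : (∑ k : Fin N, Function.update (fun _ => t) j y k)
        = y + ((N:ℝ) - 1) * t := by
      rw [Finset.sum_update_of_mem (Finset.mem_univ j)]
      have hcard : (Finset.univ \ {j}).card = N - 1 := by
        rw [Finset.sdiff_singleton_eq_erase, Finset.card_erase_of_mem (Finset.mem_univ j),
          card_univ, Fintype.card_fin]
      rw [Finset.sum_const, hcard, nsmul_eq_mul]
      have : ((N - 1 : ℕ) : ℝ) = (N:ℝ) - 1 := by
        have : 1 ≤ N := le_trans (by norm_num) hN
        push_cast [this]; ring
      rw [this]
    unfold cournotPayoff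
    rw [Function.update_self, hsum2, hRHS]
    rcases le_or_gt (a - b * (y + ((N:ℝ) - 1) * t)) 0 with h | h
    · rw [max_eq_right h]
      have : (0:ℝ) ≤ b * t ^ 2 := by positivity
      nlinarith
    · rw [max_eq_left h.le]
      nlinarith [mul_nonneg hb.le (sq_nonneg (y - t)), htb]
end

section
/- (Sufficiency of the sign condition: two-point construction, Proposition 1.) Let Y be a nonempty type (the set of opponent action profiles), let x̲ and x̄ be two actions, W > 0, and B : {x̲, x̄} × Y → ℝ satisfy −W ≤ B(x̲, y) ≤ 0 and 0 ≤ B(x̄, y) ≤ W for all y ∈ Y. Define p(x̲, y) = B(x̲, y)/W + 1 and p(x̄, y) = B(x̄, y)/W, and set ψ(x̲) = W, ψ(x̄) = 0. Then 0 ≤ p(x, y) ≤ 1 for all x ∈ {x̲, x̄}, y ∈ Y, and the autocratic identity p(x, y)·ψ(x̲) + (1 − p(x, y))·ψ(x̄) − ψ(x) = B(x, y) holds for all x ∈ {x̲, x̄} and all y ∈ Y. -/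
/-- Proposition 1: sufficiency of the sign condition (two-point construction).
If `−W ≤ B(x̲,y) ≤ 0` and `0 ≤ B(x̄,y) ≤ W`, the probabilities
`p(x̲,y) = B(x̲,y)/W + 1`, `p(x̄,y) = B(x̄,y)/W` are valid and, with the potential
`ψ(x̲) = W`, `ψ(x̄) = 0`, the autocratic identity holds. -/
theorem twoPoint_autocratic_construction {X Y : Type*} [Nonempty Y]
    (xlo xhi : X) (W : ℝ) (hW : 0 < W) (B : X → Y → ℝ)
    (hBlo : ∀ y : Y, -W ≤ B xlo y ∧ B xlo y ≤ 0)
    (hBhi : ∀ y : Y, 0 ≤ B xhi y ∧ B xhi y ≤ W)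
    (p : X → Y → ℝ)
    (hplo : ∀ y : Y, p xlo y = B xlo y / W + 1)
    (hphi : ∀ y : Y, p xhi y = B xhi y / W)
    (ψ : X → ℝ) (hψlo : ψ xlo = W) (hψhi : ψ xhi = 0) :
    ∀ x ∈ ({xlo, xhi} : Set X), ∀ y : Y,
      (0 ≤ p x y ∧ p x y ≤ 1) ∧
      p x y * ψ xlo + (1 - p x y) * ψ xhi - ψ x = B x y := by
  rintro x (rfl | rfl) y
  · obtain ⟨h1, h2⟩ := hBlo y
    rw [hplo y, hψlo, hψhi]
    have hd1 : -1 ≤ B x y / W := by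
      rw [neg_le, ← neg_div]
      exact div_le_one_of_le₀ (by linarith) hW.le
    have hd2 : B x y / W ≤ 0 := div_nonpos_of_nonpos_of_nonneg h2 hW.le
    refine ⟨⟨by linarith, by linarith⟩, ?_⟩
    field_simp
    ring
  · obtain ⟨h1, h2⟩ := hBhi y
    rw [hphi y, hψlo, hψhi]
    refine ⟨⟨div_nonneg h1 hW.le, div_le_one_of_le₀ h2 hW.le⟩, ?_⟩
    field_simp
    ring
end

section
/- (Theorem 1: no two-point equalizer strategies.) In the N-player Cournot oligopoly game, for every player j and every r ∈ ℝ, there do not exist two actions x̲, x̄ ∈ [0, x_max] such that ∑_{k≠j} s_k(x̲, x_{−j}) − r ≤ 0 for every opponent profile x_{−j} ∈ [0, x_max]^{N−1} and ∑_{k≠j} s_k(x̄, x_{−j}) − r ≥ 0 for every opponent profile x_{−j} ∈ [0, x_max]^{N−1}. -/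
open Finset Function

/-- Theorem 1: no two-point equalizer strategies exist in the Cournot oligopoly game,
for any target value `r` of the opponents' total payoff. -/
theorem cournot_no_equalizer (N : ℕ) (hN : 2 ≤ N) (a b c xmax : ℝ)
    (hc : 0 < c) (hca : c < a) (hb : 0 < b) (hxmax : a / b ≤ xmax)
    (j : Fin N) (r : ℝ) :
    ¬ ∃ xlo ∈ Set.Icc (0 : ℝ) xmax, ∃ xhi ∈ Set.Icc (0 : ℝ) xmax,
      (∀ x : Fin N → ℝ, (∀ k, x k ∈ Set.Icc (0 : ℝ) xmax) → x j = xlo →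
        (∑ k ∈ Finset.univ.erase j, cournotPayoff N a b c x k) - r ≤ 0) ∧
      (∀ x : Fin N → ℝ, (∀ k, x k ∈ Set.Icc (0 : ℝ) xmax) → x j = xhi →
        0 ≤ (∑ k ∈ Finset.univ.erase j, cournotPayoff N a b c x k) - r) := by
  rintro ⟨xlo, ⟨hlo0, hlo1⟩, xhi, ⟨hhi0, hhi1⟩, Hlo, Hhi⟩
  have ha : 0 < a := hc.trans hca
  have hxpos : 0 < xmax := lt_of_lt_of_le (div_pos ha hb) hxmax
  -- lo profile: opponents all play 0
  set xl : Fin N → ℝ := fun k => if k = j then xlo else 0 with hxl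
  have h1 := Hlo xl (fun k => by
      by_cases hk : k = j <;> simp [xl, hk, hlo0, hlo1, le_of_lt hxpos])
    (by simp [xl])
  have hsum1 : ∑ k ∈ Finset.univ.erase j, cournotPayoff N a b c xl k = 0 := by
    apply Finset.sum_eq_zero
    intro k hk
    have hkj : k ≠ j := Finset.ne_of_mem_erase hk
    simp [cournotPayoff, xl, hkj]
  rw [hsum1] at h1
  have hr : 0 ≤ r := by linarith
  -- hi profile: opponents all play xmax
  set xh : Fin N → ℝ := fun k => if k = j then xhi else xmax with hxh
  have h2 := Hhi xh (fun k => by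
      by_cases hk : k = j <;> simp [xh, hk, hhi0, hhi1, le_of_lt hxpos, le_refl])
    (by simp [xh])
  have hScard : (Finset.univ.erase j).card = N - 1 := by
    simp [Finset.card_erase_of_mem]
  have hN1 : (1 : ℝ) ≤ (N - 1 : ℕ) := by
    have : 1 ≤ N - 1 := by omega
    exact_mod_cast this
  have hS : a - b * ∑ k, xh k ≤ 0 := by
    have hsum : ∑ k, xh k = xhi + (N - 1 : ℕ) * xmax := by
      rw [← Finset.add_sum_erase _ _ (Finset.mem_univ j)]
      have h0 : ∑ k ∈ Finset.univ.erase j, xh k = ∑ _k ∈ Finset.univ.erase j, xmax :=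
        Finset.sum_congr rfl fun k hk => by simp [xh, Finset.ne_of_mem_erase hk]
      have : ∑ k ∈ Finset.univ.erase j, xh k = (N - 1 : ℕ) * xmax := by
        rw [h0, Finset.sum_const, hScard, nsmul_eq_mul]
      simp [xh, this]
    rw [hsum]
    have hba : a ≤ b * xmax := by
      rw [div_le_iff₀ hb] at hxmax; linarith
    nlinarith
  have hsum2 : ∑ k ∈ Finset.univ.erase j, cournotPayoff N a b c xh k
      = (N - 1 : ℕ) * (-(c * xmax)) := by
    have h0 : ∑ k ∈ Finset.univ.erase j, cournotPayoff N a b c xh k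
        = ∑ _k ∈ Finset.univ.erase j, (-(c * xmax)) := by
      refine Finset.sum_congr rfl fun k hk => ?_
      have hkj : k ≠ j := Finset.ne_of_mem_erase hk
      simp only [cournotPayoff]
      rw [max_eq_right hS]
      simp [xh, hkj]
    rw [h0, Finset.sum_const, hScard, nsmul_eq_mul]
  rw [hsum2] at h2
  nlinarith [mul_le_mul_of_nonneg_right hN1 (le_of_lt (mul_pos hc hxpos))]
end

section
/- (Theorem 2: characterization of two-point self-pinning strategies.) In the N-player Cournot oligopoly game, for a player j and r ∈ ℝ, there exist two actions x̲, x̄ ∈ [0, x_max] such that s_j(x̲, x_{−j}) − r ≤ 0 for every opponent profile x_{−j} ∈ [0, x_max]^{N−1} and s_j(x̄, x_{−j}) − r ≥ 0 for every opponent profile x_{−j} ∈ [0, x_max]^{N−1}, if and only if −c·x_max ≤ r ≤ 0. -/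
open Finset Function

/-- Theorem 2: two-point autocratic strategies pinning player `j`'s own payoff to `r`
exist if and only if `−c·x_max ≤ r ≤ 0`. -/
theorem cournot_self_pinning_iff (N : ℕ) (hN : 2 ≤ N) (a b c xmax : ℝ)
    (hc : 0 < c) (hca : c < a) (hb : 0 < b) (hxmax : a / b ≤ xmax)
    (j : Fin N) (r : ℝ) :
    (∃ xlo ∈ Set.Icc (0 : ℝ) xmax, ∃ xhi ∈ Set.Icc (0 : ℝ) xmax,
      (∀ x : Fin N → ℝ, (∀ k, x k ∈ Set.Icc (0 : ℝ) xmax) → x j = xlo →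
        cournotPayoff N a b c x j - r ≤ 0) ∧
      (∀ x : Fin N → ℝ, (∀ k, x k ∈ Set.Icc (0 : ℝ) xmax) → x j = xhi →
        0 ≤ cournotPayoff N a b c x j - r)) ↔
    (-c * xmax ≤ r ∧ r ≤ 0) := by
  have ha : 0 < a := lt_trans hc hca
  have haxb : a ≤ b * xmax := by
    rw [div_le_iff₀ hb] at hxmax
    linarith [hxmax]
  have hxm0 : 0 ≤ xmax := le_trans (le_of_lt (div_pos ha hb)) hxmax
  constructor
  · rintro ⟨xlo, hxlo, xhi, hxhi, hlo, hhi⟩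
    -- test profile for xhi: opponents at xmax
    obtain ⟨k, hk⟩ := Fintype.exists_ne_of_one_lt_card (by simp; omega) j
    have hhi' := hhi (fun i => if i = j then xhi else xmax)
      (fun i => by by_cases h : i = j <;> simp [h, hxhi.1, hxhi.2, hxm0, le_refl])
      (by simp)
    have hlo' := hlo (fun i => if i = j then xlo else 0)
      (fun i => by by_cases h : i = j <;> simp [h, hxlo.1, hxlo.2, hxm0, le_refl])
      (by simp)
    have hsum : xmax ≤ ∑ i, (if i = j then xhi else xmax) := by
      have := Finset.single_le_sum (f := fun i => if i = j then xhi else xmax)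
        (fun i _ => by by_cases h : i = j <;> simp [h, hxhi.1, hxm0]) (Finset.mem_univ k)
      simpa [hk] using this
    have hmax : max (a - b * ∑ i, (if i = j then xhi else xmax)) 0 = 0 := by
      apply max_eq_right
      nlinarith [hsum]
    rw [cournotPayoff, hmax] at hhi'
    simp at hhi'
    have hr0 : r ≤ 0 := by nlinarith [hxhi.1]
    have hsum2 : ∑ i, (if i = j then xlo else (0:ℝ)) = xlo := by
      simp [Finset.sum_ite_eq']
    rw [cournotPayoff, hsum2] at hlo'
    simp at hlo'
    have : 0 ≤ max (a - b * xlo) 0 * xlo := mul_nonneg (le_max_right _ _) hxlo.1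
    constructor
    · nlinarith [hxlo.2]
    · exact hr0
  · rintro ⟨hr1, hr2⟩
    refine ⟨xmax, ⟨hxm0, le_refl _⟩, -r / c, ⟨div_nonneg (by linarith) hc.le, ?_⟩, ?_, ?_⟩
    · rw [div_le_iff₀ hc]
      nlinarith
    · intro x hx hxj
      have hsum : xmax ≤ ∑ i, x i := by
        have := Finset.single_le_sum (f := x) (fun i _ => (hx i).1) (Finset.mem_univ j)
        rw [hxj] at this; exact this
      have hmax : max (a - b * ∑ i, x i) 0 = 0 := by
        apply max_eq_right; nlinarith
      rw [cournotPayoff, hmax, hxj]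
      nlinarith
    · intro x hx hxj
      have h1 : 0 ≤ max (a - b * ∑ i, x i) 0 * x j :=
        mul_nonneg (le_max_right _ _) (hx j).1
      have h2 : c * x j = -r := by
        rw [hxj]; field_simp
      rw [cournotPayoff, h2]
      linarith
end

section
/- (Theorem 3: characterization of two-point positively correlated autocratic strategies.) In the N-player Cournot oligopoly game, fix a player j, χ > 0 and κ with −c·x_max ≤ κ ≤ (a−c)²/(4b), and define B(x) = s_j(x) − (χ/(N−1))·∑_{k≠j} s_k(x) + (χ−1)·κ. Then there exist two actions x̲, x̄ ∈ [0, x_max] such that B(x̲, x_{−j}) ≤ 0 for every opponent profile x_{−j} ∈ [0, x_max]^{N−1} and B(x̄, x_{−j}) ≥ 0 for every opponent profile x_{−j} ∈ [0, x_max]^{N−1}, if and only if χ = 1, or (0 < χ < 1 and κ ≤ 0). -/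
open Finset Function

/-- `B(x) = s_j(x) − (χ/(N−1))·∑_{k≠j} s_k(x) + (χ−1)·κ`. -/
noncomputable def cournotB (N : ℕ) (a b c χ κ : ℝ) (j : Fin N) (x : Fin N → ℝ) : ℝ :=
  cournotPayoff N a b c x j
    - χ / ((N : ℝ) - 1) * ∑ k ∈ Finset.univ.erase j, cournotPayoff N a b c x k
    + (χ - 1) * κ

/-- Rewriting `B` in product form. -/
lemma cournotB_eq (N : ℕ) (a b c χ κ : ℝ) (j : Fin N) (x : Fin N → ℝ) :
    cournotB N a b c χ κ j x =
      (max (a - b * ∑ k, x k) 0 - c) *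
        (x j - χ / ((N : ℝ) - 1) * ∑ k ∈ Finset.univ.erase j, x k) + (χ - 1) * κ := by
  simp only [cournotB, cournotPayoff]
  rw [Finset.sum_sub_distrib, ← Finset.mul_sum, ← Finset.mul_sum]
  ring

set_option maxHeartbeats 1000000 in
/-- Theorem 3: two-point positively correlated autocratic strategies exist
if and only if `χ = 1`, or `0 < χ < 1` and `κ ≤ 0`. -/
theorem cournot_positively_correlated_iff (N : ℕ) (hN : 2 ≤ N) (a b c xmax : ℝ)
    (hc : 0 < c) (hca : c < a) (hb : 0 < b) (hxmax : a / b ≤ xmax)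
    (j : Fin N) (χ κ : ℝ) (hχ : 0 < χ)
    (hκ1 : -c * xmax ≤ κ) (hκ2 : κ ≤ (a - c) ^ 2 / (4 * b)) :
    (∃ xlo ∈ Set.Icc (0 : ℝ) xmax, ∃ xhi ∈ Set.Icc (0 : ℝ) xmax,
      (∀ x : Fin N → ℝ, (∀ k, x k ∈ Set.Icc (0 : ℝ) xmax) → x j = xlo →
        cournotB N a b c χ κ j x ≤ 0) ∧
      (∀ x : Fin N → ℝ, (∀ k, x k ∈ Set.Icc (0 : ℝ) xmax) → x j = xhi →
        0 ≤ cournotB N a b c χ κ j x)) ↔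
    (χ = 1 ∨ (0 < χ ∧ χ < 1 ∧ κ ≤ 0)) := by
  have hN1 : (1:ℝ) ≤ (N:ℝ) - 1 := by
    have : (2:ℝ) ≤ (N:ℝ) := by exact_mod_cast hN
    linarith
  have hn1pos : (0:ℝ) < (N:ℝ) - 1 := by linarith
  have ha : 0 < a := lt_trans hc hca
  have hxmaxpos : 0 < xmax := lt_of_lt_of_le (div_pos ha hb) hxmax
  have haxmax : a ≤ b * xmax := by
    rw [div_le_iff₀ hb] at hxmax; linarith [hxmax]
  have hcard : (((Finset.univ.erase j).card : ℝ)) = (N:ℝ) - 1 := by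
    rw [Finset.card_erase_of_mem (Finset.mem_univ j), Finset.card_univ, Fintype.card_fin,
      Nat.cast_sub (by omega : 1 ≤ N), Nat.cast_one]
  -- symmetric profiles
  set prof : ℝ → ℝ → Fin N → ℝ := fun v t k => if k = j then v else t with hprof
  have hprofj : ∀ v t, prof v t j = v := fun v t => if_pos rfl
  have hprofmem : ∀ v t, v ∈ Set.Icc (0:ℝ) xmax → t ∈ Set.Icc (0:ℝ) xmax →
      ∀ k, prof v t k ∈ Set.Icc (0:ℝ) xmax := by
    intro v t hv ht k
    simp only [hprof]
    by_cases h : k = j <;> simp [h, hv, ht]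
  have hprofsum : ∀ v t, ∑ k ∈ Finset.univ.erase j, prof v t k = ((N:ℝ) - 1) * t := by
    intro v t
    rw [Finset.sum_congr rfl (fun k hk => if_neg (Finset.ne_of_mem_erase hk)),
      Finset.sum_const, nsmul_eq_mul, hcard]
  have hproftot : ∀ v t, ∑ k, prof v t k = v + ((N:ℝ) - 1) * t := by
    intro v t
    rw [← Finset.add_sum_erase _ _ (Finset.mem_univ j), hprofj, hprofsum]
  have hBprof : ∀ v t, cournotB N a b c χ κ j (prof v t) =
      (max (a - b * (v + ((N:ℝ) - 1) * t)) 0 - c) * (v - χ * t) + (χ - 1) * κ := by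
    intro v t
    rw [cournotB_eq, hproftot, hprofsum, hprofj]
    have : χ / ((N:ℝ) - 1) * (((N:ℝ) - 1) * t) = χ * t := by
      field_simp
    rw [this]
  constructor
  · rintro ⟨xlo, hlomem, xhi, hhimem, hlo, hhi⟩
    -- key: it's impossible that (1-χ)*κ > 0
    have key : ¬ (0 < (1 - χ) * κ) := by
      intro hpos
      rcases le_or_gt xhi (χ * xmax) with hle | hgt
      · -- t = xhi / χ
        have ht : xhi / χ ∈ Set.Icc (0:ℝ) xmax := by
          constructor
          · exact div_nonneg hhimem.1 hχ.le
          · rw [div_le_iff₀ hχ]; linarith [hle]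
        have h := hhi (prof xhi (xhi / χ)) (hprofmem _ _ hhimem ht) (hprofj _ _)
        rw [hBprof] at h
        have hz : xhi - χ * (xhi / χ) = 0 := by field_simp; ring
        rw [hz, mul_zero, zero_add] at h
        nlinarith
      · -- t = xmax
        have h := hhi (prof xhi xmax) (hprofmem _ _ hhimem ⟨le_of_lt hxmaxpos, le_refl _⟩)
          (hprofj _ _)
        rw [hBprof] at h
        have hQ : max (a - b * (xhi + ((N:ℝ) - 1) * xmax)) 0 = 0 := by
          apply max_eq_right
          nlinarith [hhimem.1]
        rw [hQ] at h
        nlinarith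
    rcases lt_trichotomy χ 1 with hlt | heq | hgt
    · right
      refine ⟨hχ, hlt, ?_⟩
      by_contra hκ
      push_neg at hκ
      exact key (mul_pos (by linarith) hκ)
    · exact Or.inl heq
    · exfalso
      rcases le_or_gt 0 κ with hκ | hκ
      · -- xlo at t = xmax gives B > 0
        have h := hlo (prof xlo xmax) (hprofmem _ _ hlomem ⟨le_of_lt hxmaxpos, le_refl _⟩)
          (hprofj _ _)
        rw [hBprof] at h
        have hQ : max (a - b * (xlo + ((N:ℝ) - 1) * xmax)) 0 = 0 := by
          apply max_eq_right
          nlinarith [hlomem.1]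
        rw [hQ] at h
        nlinarith [mul_le_mul_of_nonneg_left hlomem.2 hc.le,
          mul_nonneg (le_of_lt (sub_pos.mpr hgt)) hκ,
          mul_pos (mul_pos hc hxmaxpos) (sub_pos.mpr hgt)]
      · exact key (mul_pos_of_neg_of_neg (by linarith) hκ)
  · intro h
    have hχ1 : χ ≤ 1 := by
      rcases h with h | h
      exacts [le_of_eq h, le_of_lt h.2.1]
    have hκχ : 0 ≤ (χ - 1) * κ := by
      rcases h with h | h
      · simp [h]
      · nlinarith [mul_nonneg (by linarith [h.2.1] : (0:ℝ) ≤ 1 - χ)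
          (by linarith [h.2.2] : (0:ℝ) ≤ -κ)]
    refine ⟨xmax, ⟨le_of_lt hxmaxpos, le_refl _⟩,
      χ * (a - c) / (b * (χ + (N:ℝ) - 1)), ⟨?_, ?_⟩, ?_, ?_⟩
    · exact div_nonneg (mul_nonneg hχ.le (by linarith)) (le_of_lt (by nlinarith))
    · -- xhi ≤ xmax
      have hD : 0 < b * (χ + (N:ℝ) - 1) := by nlinarith
      rw [div_le_iff₀ hD]
      nlinarith
    · -- xlo = xmax works
      intro x hx hxj
      rw [cournotB_eq, hxj]
      set T := ∑ k ∈ Finset.univ.erase j, x k with hT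
      have hT0 : 0 ≤ T := Finset.sum_nonneg (fun k _ => (hx k).1)
      have hTmax : T ≤ ((N:ℝ) - 1) * xmax := by
        calc T ≤ ∑ k ∈ Finset.univ.erase j, xmax :=
              Finset.sum_le_sum (fun k _ => (hx k).2)
          _ = ((Finset.univ.erase j).card : ℝ) * xmax := by
              rw [Finset.sum_const, nsmul_eq_mul]
          _ = ((N:ℝ) - 1) * xmax := by rw [hcard]
      have hstot : ∑ k, x k = xmax + T := by
        rw [← Finset.add_sum_erase _ _ (Finset.mem_univ j), hxj, hT]
      rw [hstot]
      have hQ : max (a - b * (xmax + T)) 0 = 0 := by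
        apply max_eq_right
        nlinarith
      rw [hQ]
      have hχT : χ / ((N:ℝ) - 1) * T ≤ χ * xmax := by
        rw [div_mul_eq_mul_div, div_le_iff₀ hn1pos]
        nlinarith
      nlinarith [mul_le_mul_of_nonneg_left hχT hc.le,
        mul_nonneg (by linarith : (0:ℝ) ≤ 1 - χ) (by linarith : (0:ℝ) ≤ κ + c * xmax)]
    · -- xhi works
      intro x hx hxj
      rw [cournotB_eq, hxj]
      set xhi := χ * (a - c) / (b * (χ + (N:ℝ) - 1)) with hxhidef
      have hD : 0 < b * (χ + (N:ℝ) - 1) := by nlinarith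
      set T := ∑ k ∈ Finset.univ.erase j, x k with hT
      have hT0 : 0 ≤ T := Finset.sum_nonneg (fun k _ => (hx k).1)
      have hstot : ∑ k, x k = xhi + T := by
        rw [← Finset.add_sum_erase _ _ (Finset.mem_univ j), hxj, hT]
      rw [hstot]
      have hkey : 0 ≤ (max (a - b * (xhi + T)) 0 - c) * (xhi - χ / ((N:ℝ) - 1) * T) := by
        set Ts := ((N:ℝ) - 1) * (a - c) / (b * (χ + (N:ℝ) - 1)) with hTs
        have hsum_star : xhi + Ts = (a - c) / b := by
          rw [hxhidef, hTs]
          rw [← add_div, div_eq_div_iff (ne_of_gt hD) hb.ne']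
          ring
        have hfact : χ / ((N:ℝ) - 1) * Ts = xhi := by
          rw [hxhidef, hTs]
          field_simp
        have hchin : 0 ≤ χ / ((N:ℝ) - 1) := by positivity
        rcases le_total T Ts with hTle | hTge
        · have hf2 : 0 ≤ xhi - χ / ((N:ℝ) - 1) * T := by
            have := mul_le_mul_of_nonneg_left hTle hchin
            linarith [hfact]
          have hP : c ≤ a - b * (xhi + T) := by
            have h1 : b * (xhi + Ts) = a - c := by
              rw [hsum_star]; field_simp
            nlinarith
          have hQ : max (a - b * (xhi + T)) 0 = a - b * (xhi + T) :=
            max_eq_left (by linarith)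
          rw [hQ]
          exact mul_nonneg (by linarith) hf2
        · have hf2 : xhi - χ / ((N:ℝ) - 1) * T ≤ 0 := by
            have := mul_le_mul_of_nonneg_left hTge hchin
            linarith [hfact]
          have hP : a - b * (xhi + T) ≤ c := by
            have h1 : b * (xhi + Ts) = a - c := by
              rw [hsum_star]; field_simp
            nlinarith
          have hQ : max (a - b * (xhi + T)) 0 - c ≤ 0 := by
            have := max_le hP hc.le
            linarith
          nlinarith [mul_nonneg (neg_nonneg.mpr hQ) (neg_nonneg.mpr hf2)]
      nlinarith
end

section
/- (Fair autocratic strategy: explicit construction for χ = 1.) In the N-player Cournot oligopoly game, fix a player j and define B(x) = s_j(x) − (1/(N−1))·∑_{k≠j} s_k(x). Then the Walras action x̄ = (a−c)/(N·b) and the action x̲ = x_max satisfy: B(x̄, x_{−j}) ≥ 0 for every opponent profile x_{−j} ∈ [0, x_max]^{N−1}, and B(x_max, x_{−j}) = −c·(x_max − (1/(N−1))·∑_{k≠j} x_k) ≤ 0 for every opponent profile x_{−j} ∈ [0, x_max]^{N−1}. -/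
open Finset Function

/-- `B(x) = s_j(x) − (1/(N−1))·∑_{k≠j} s_k(x)` (the fair case `χ = 1`). -/
noncomputable def cournotBfair (N : ℕ) (a b c : ℝ) (j : Fin N) (x : Fin N → ℝ) : ℝ :=
  cournotPayoff N a b c x j
    - 1 / ((N : ℝ) - 1) * ∑ k ∈ Finset.univ.erase j, cournotPayoff N a b c x k

lemma cournotBfair_factor (N : ℕ) (a b c : ℝ) (j : Fin N) (x : Fin N → ℝ) :
    cournotBfair N a b c j x =
      (max (a - b * ∑ k, x k) 0 - c) *
        (x j - 1 / ((N : ℝ) - 1) * ∑ k ∈ Finset.univ.erase j, x k) := by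
  unfold cournotBfair cournotPayoff
  have h : ∀ k : Fin N, max (a - b * ∑ k, x k) 0 * x k - c * x k
      = (max (a - b * ∑ k, x k) 0 - c) * x k := fun k => by ring
  simp_rw [h]
  rw [← Finset.mul_sum]
  ring

/-- Fair autocratic strategy, explicit construction: the Walras action
`x̄ = (a−c)/(Nb)` makes `B` nonnegative, and `x̲ = x_max` gives
`B = −c·(x_max − (1/(N−1))·∑_{k≠j} x_k) ≤ 0`, for every opponent profile. -/
theorem cournot_fair_construction (N : ℕ) (hN : 2 ≤ N) (a b c xmax : ℝ)
    (hc : 0 < c) (hca : c < a) (hb : 0 < b) (hxmax : a / b ≤ xmax) (j : Fin N) :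
    (∀ x : Fin N → ℝ, (∀ k, x k ∈ Set.Icc (0 : ℝ) xmax) →
      x j = (a - c) / ((N : ℝ) * b) → 0 ≤ cournotBfair N a b c j x) ∧
    (∀ x : Fin N → ℝ, (∀ k, x k ∈ Set.Icc (0 : ℝ) xmax) → x j = xmax →
      cournotBfair N a b c j x
          = -c * (xmax - 1 / ((N : ℝ) - 1) * ∑ k ∈ Finset.univ.erase j, x k) ∧
        cournotBfair N a b c j x ≤ 0) := by
  have hN1 : (0 : ℝ) < (N : ℝ) - 1 := by
    have : (2 : ℝ) ≤ (N : ℝ) := by exact_mod_cast hN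
    linarith
  have hNpos : (0 : ℝ) < (N : ℝ) := by linarith
  constructor
  · intro x hx hxj
    rw [cournotBfair_factor]
    set T := ∑ k ∈ Finset.univ.erase j, x k with hT
    have hS : ∑ k, x k = x j + T := (Finset.add_sum_erase _ _ (Finset.mem_univ j)).symm
    have hwb : (N : ℝ) * b * x j = a - c := by
      rw [hxj]; field_simp
    rcases le_or_gt (a - b * ∑ k, x k) 0 with h | h
    · rw [max_eq_right h]
      have hTle : ((N : ℝ) - 1) * x j ≤ T := by
        rw [hS] at h
        nlinarith [mul_pos hNpos hc]
      have h1 : x j - 1 / ((N : ℝ) - 1) * T ≤ 0 := by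
        rw [sub_nonpos, ← sub_nonneg]
        have heq : 1 / ((N : ℝ) - 1) * T - x j = (T - ((N : ℝ) - 1) * x j) / ((N : ℝ) - 1) := by
          field_simp
        rw [heq]
        exact div_nonneg (by linarith) hN1.le
      have h2 : (0 : ℝ) - c ≤ 0 := by linarith
      nlinarith [mul_nonneg (neg_nonneg.mpr h2) (neg_nonneg.mpr h1)]
    · rw [max_eq_left h.le]
      have key2 : a - b * ∑ k, x k - c = b * (((N : ℝ) - 1) * x j - T) := by
        rw [hS]; linarith [hwb]
      have heq : (a - b * ∑ k, x k - c) * (x j - 1 / ((N : ℝ) - 1) * T)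
          = b * (((N : ℝ) - 1) * x j - T) ^ 2 / ((N : ℝ) - 1) := by
        rw [key2]; field_simp
      rw [heq]; positivity
  · intro x hx hxj
    set T := ∑ k ∈ Finset.univ.erase j, x k with hT
    have hS : ∑ k, x k = x j + T := (Finset.add_sum_erase _ _ (Finset.mem_univ j)).symm
    have hT0 : 0 ≤ T := Finset.sum_nonneg fun k _ => (hx k).1
    have hTle : T ≤ ((N : ℝ) - 1) * xmax := by
      have hcard : (Finset.univ.erase j).card = N - 1 := by
        simp [Finset.card_erase_of_mem]
      have := Finset.sum_le_card_nsmul (Finset.univ.erase j) x xmax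
        (fun k _ => (hx k).2)
      rw [hcard] at this
      have hcast : ((N - 1 : ℕ) : ℝ) = (N : ℝ) - 1 := by
        have := hN; push_cast [Nat.cast_sub (by omega : 1 ≤ N)]; ring
      calc T ≤ (N - 1 : ℕ) • xmax := this
        _ = ((N - 1 : ℕ) : ℝ) * xmax := by rw [nsmul_eq_mul]
        _ = ((N : ℝ) - 1) * xmax := by rw [hcast]
    have hbx : a ≤ b * xmax := by
      rw [div_le_iff₀ hb] at hxmax; linarith
    have hmax : a - b * ∑ k, x k ≤ 0 := by
      rw [hS, hxj]; nlinarith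
    rw [cournotBfair_factor, max_eq_right hmax, hxj]
    constructor
    · ring
    · have h1 : 0 ≤ xmax - 1 / ((N : ℝ) - 1) * T := by
        rw [sub_nonneg]
        rw [div_mul_eq_mul_div, div_le_iff₀ hN1]
        linarith
      nlinarith
end

section
/- (Theorem 3: explicit construction for 0 < χ < 1 and κ ≤ 0.) In the N-player Cournot oligopoly game, fix a player j, 0 < χ < 1 and −c·x_max ≤ κ ≤ 0, and define B(x) = s_j(x) − (χ/(N−1))·∑_{k≠j} s_k(x) + (χ−1)·κ. Then the actions x̄ = (χ/(χ+N−1))·(a−c)/b and x̲ = x_max satisfy: B(x̄, x_{−j}) ≥ 0 for every opponent profile x_{−j} ∈ [0, x_max]^{N−1}, and B(x_max, x_{−j}) ≤ (1−χ)·(|κ| − c·x_max) ≤ 0 for every opponent profile x_{−j} ∈ [0, x_max]^{N−1}. -/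
open Finset Function

set_option maxHeartbeats 1000000 in
/-- Theorem 3, explicit construction for `0 < χ < 1` and `−c·x_max ≤ κ ≤ 0`:
the actions `x̄ = (χ/(χ+N−1))·(a−c)/b` and `x̲ = x_max` satisfy the sign conditions. -/
theorem cournot_positively_correlated_construction (N : ℕ) (hN : 2 ≤ N)
    (a b c xmax : ℝ) (hc : 0 < c) (hca : c < a) (hb : 0 < b) (hxmax : a / b ≤ xmax)
    (j : Fin N) (χ κ : ℝ) (hχ0 : 0 < χ) (hχ1 : χ < 1)
    (hκ1 : -c * xmax ≤ κ) (hκ2 : κ ≤ 0) :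
    (∀ x : Fin N → ℝ, (∀ k, x k ∈ Set.Icc (0 : ℝ) xmax) →
      x j = χ / (χ + (N : ℝ) - 1) * ((a - c) / b) →
      0 ≤ cournotB N a b c χ κ j x) ∧
    (∀ x : Fin N → ℝ, (∀ k, x k ∈ Set.Icc (0 : ℝ) xmax) → x j = xmax →
      cournotB N a b c χ κ j x ≤ (1 - χ) * (|κ| - c * xmax) ∧
        (1 - χ) * (|κ| - c * xmax) ≤ 0) := by
  have hN2 : (2:ℝ) ≤ (N:ℝ) := by exact_mod_cast hN
  have hn1 : (0:ℝ) < (N:ℝ) - 1 := by linarith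
  have hχN : (0:ℝ) < χ + (N:ℝ) - 1 := by linarith
  have hκχ : 0 ≤ (χ - 1) * κ := by nlinarith
  constructor
  · intro x hx hxj
    set S := ∑ k, x k with hS
    set P := max (a - b * S) 0 with hP
    have hT : ∑ k ∈ Finset.univ.erase j, x k = S - x j := by
      have := Finset.sum_erase_add Finset.univ x (Finset.mem_univ j)
      linarith
    have hsum : ∑ k ∈ Finset.univ.erase j, cournotPayoff N a b c x k
        = (P - c) * (S - x j) := by
      rw [← hT, Finset.mul_sum]
      refine Finset.sum_congr rfl (fun k _ => ?_)
      simp only [cournotPayoff, ← hS, ← hP]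
      ring
    have hBj : cournotPayoff N a b c x j = (P - c) * x j := by
      simp only [cournotPayoff, ← hS, ← hP]; ring
    have hB : cournotB N a b c χ κ j x
        = (P - c) * x j - χ / ((N:ℝ) - 1) * ((P - c) * (S - x j)) + (χ - 1) * κ := by
      rw [cournotB, hsum, hBj]
    have hkey : (P - c) * x j - χ / ((N:ℝ) - 1) * ((P - c) * (S - x j))
        = χ / ((N:ℝ) - 1) * ((P - c) * ((a - c) / b - S)) := by
      rw [hxj]
      field_simp
      ring
    have hprod : 0 ≤ (P - c) * ((a - c) / b - S) := by
      rcases le_or_gt S ((a - c) / b) with h | h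
      · have h1 : c ≤ a - b * S := by
          rw [le_div_iff₀ hb] at h; nlinarith
        have hPe : P = a - b * S := max_eq_left (by linarith)
        apply mul_nonneg <;> [linarith [hPe ▸ h1]; linarith]
      · have h1 : a - b * S < c := by
          rw [div_lt_iff₀ hb] at h; nlinarith
        have hPle : P ≤ c := max_le (by linarith) (by linarith)
        nlinarith
    rw [hB, hkey]
    have : 0 ≤ χ / ((N:ℝ) - 1) * ((P - c) * ((a - c) / b - S)) :=
      mul_nonneg (div_nonneg hχ0.le hn1.le) hprod
    linarith
  · intro x hx hxj
    set S := ∑ k, x k with hS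
    have hT : ∑ k ∈ Finset.univ.erase j, x k = S - x j := by
      have := Finset.sum_erase_add Finset.univ x (Finset.mem_univ j)
      linarith
    have hTnn : 0 ≤ S - x j := by
      rw [← hT]; exact Finset.sum_nonneg fun k _ => (hx k).1
    have hTle : S - x j ≤ ((N:ℝ) - 1) * xmax := by
      rw [← hT]
      calc ∑ k ∈ Finset.univ.erase j, x k ≤ ∑ _k ∈ Finset.univ.erase j, xmax :=
            Finset.sum_le_sum fun k _ => (hx k).2
        _ = ((Finset.univ.erase j).card : ℝ) * xmax := by rw [Finset.sum_const]; ring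
        _ = ((N:ℝ) - 1) * xmax := by
            rw [Finset.card_erase_of_mem (Finset.mem_univ j)]
            simp [Nat.cast_sub (by omega : 1 ≤ N)]
    have hxm : 0 < xmax := lt_of_lt_of_le (div_pos (by linarith) hb) hxmax
    have hSa : a ≤ b * S := by
      have : a / b ≤ S := le_trans hxmax (by nlinarith [hxj ▸ hTnn])
      rw [div_le_iff₀ hb] at this; linarith
    have hP0 : max (a - b * S) 0 = 0 := max_eq_right (by linarith)
    have hsum : ∑ k ∈ Finset.univ.erase j, cournotPayoff N a b c x k
        = -c * (S - x j) := by
      rw [← hT, Finset.mul_sum]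
      refine Finset.sum_congr rfl (fun k _ => ?_)
      simp only [cournotPayoff, ← hS, hP0]
      ring
    have hBj : cournotPayoff N a b c x j = -c * xmax := by
      simp only [cournotPayoff, ← hS, hP0, hxj]; ring
    have hBeq : cournotB N a b c χ κ j x
        = -c * xmax + χ / ((N:ℝ) - 1) * (c * (S - x j)) + (χ - 1) * κ := by
      rw [cournotB, hsum, hBj]; ring
    have habs : |κ| = -κ := abs_of_nonpos hκ2
    clear_value S
    clear hT hsum hBj hP0 hSa hx hS hxj
    constructor
    · rw [hBeq, habs]
      have h1 : χ / ((N:ℝ) - 1) * (c * (S - x j)) ≤ χ * (c * xmax) := by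
        rw [div_mul_eq_mul_div, div_le_iff₀ hn1]
        nlinarith [mul_le_mul_of_nonneg_left hTle (mul_nonneg hχ0.le hc.le)]
      nlinarith
    · rw [habs]
      nlinarith [mul_nonneg (by linarith : (0:ℝ) ≤ 1 - χ) (by linarith : (0:ℝ) ≤ c * xmax + κ)]
end

section
/- (Lower-bound lemma for positively correlated B.) In the N-player Cournot oligopoly game, fix a player j, χ > 0 and κ ∈ ℝ, and define B(x) = s_j(x) − (χ/(N−1))·∑_{k≠j} s_k(x) + (χ−1)·κ. Then for the action x_j = (χ/(χ+N−1))·(a−c)/b and every opponent profile x_{−j} ∈ [0, x_max]^{N−1}, B(x_j, x_{−j}) ≥ (χ−1)·κ. -/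
open Finset Function

/-- Lower-bound lemma: for `x_j = (χ/(χ+N−1))·(a−c)/b` and every opponent profile,
`B(x_j, x₋ⱼ) ≥ (χ−1)·κ`. -/
theorem cournot_B_lower_bound (N : ℕ) (hN : 2 ≤ N) (a b c xmax : ℝ)
    (hc : 0 < c) (hca : c < a) (hb : 0 < b) (hxmax : a / b ≤ xmax)
    (j : Fin N) (χ κ : ℝ) (hχ : 0 < χ) :
    ∀ x : Fin N → ℝ, (∀ k, x k ∈ Set.Icc (0 : ℝ) xmax) →
      x j = χ / (χ + (N : ℝ) - 1) * ((a - c) / b) →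
      (χ - 1) * κ ≤ cournotB N a b c χ κ j x := by
  intro x hx hxj
  have hN1 : (1 : ℝ) ≤ (N : ℝ) - 1 := by
    have : (2 : ℝ) ≤ (N : ℝ) := by exact_mod_cast hN
    linarith
  have hN1pos : (0 : ℝ) < (N : ℝ) - 1 := by linarith
  have hd : (0 : ℝ) < χ + (N : ℝ) - 1 := by linarith
  set S := ∑ k, x k with hS
  set T := ∑ k ∈ Finset.univ.erase j, x k with hT
  have hsplit : x j + T = S := Finset.add_sum_erase _ x (Finset.mem_univ j)
  have hTnn : 0 ≤ T := Finset.sum_nonneg fun k _ => (hx k).1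
  have hsum : ∑ k ∈ Finset.univ.erase j, cournotPayoff N a b c x k
      = max (a - b * S) 0 * T - c * T := by
    simp only [cournotPayoff, ← hS]
    rw [Finset.sum_sub_distrib, ← Finset.mul_sum, ← Finset.mul_sum, hT]
  rw [cournotB, cournotPayoff, ← hS, hsum]
  have hxjb : b * x j * (χ + (N : ℝ) - 1) = χ * (a - c) := by
    rw [hxj]; field_simp
  rcases le_or_gt (a - b * S) 0 with h | h
  · rw [max_eq_right h]
    have hSa : a ≤ b * (x j + T) := by rw [hsplit]; linarith
    have key : ((N : ℝ) - 1) * x j ≤ χ * T := by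
      nlinarith [hxjb, mul_le_mul_of_nonneg_left hSa hχ.le, mul_pos hχ hc, hb]
    have hdiv : x j ≤ χ / ((N : ℝ) - 1) * T := by
      rw [div_mul_eq_mul_div, le_div_iff₀ hN1pos]
      linarith
    nlinarith [mul_le_mul_of_nonneg_left hdiv hc.le]
  · rw [max_eq_left h.le]
    have hkey : (a - b * S - c) * x j - χ / ((N : ℝ) - 1) * ((a - b * S - c) * T)
        = χ * ((a - c) * ((N : ℝ) - 1) - b * T * (χ + (N : ℝ) - 1)) ^ 2
          / (b * ((N : ℝ) - 1) * (χ + (N : ℝ) - 1) ^ 2) := by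
      rw [← hsplit, hxj]
      field_simp
      ring
    have key : 0 ≤ (a - b * S - c) * x j - χ / ((N : ℝ) - 1) * ((a - b * S - c) * T) := by
      rw [hkey]
      positivity
    nlinarith [key]
end

section
/- (Upper-bound lemma for positively correlated B.) In the N-player Cournot oligopoly game, fix a player j, χ > 0 and κ ∈ ℝ, and define B(x) = s_j(x) − (χ/(N−1))·∑_{k≠j} s_k(x) + (χ−1)·κ. Then for every action x_j ∈ [0, x_max] and every opponent profile x_{−j} ∈ [0, x_max]^{N−1} whose total production satisfies ∑_{k≠j} x_k = ((N−1)/(χ+N−1))·(a−c)/b, one has B(x_j, x_{−j}) ≤ (χ−1)·κ. In particular, if (χ−1)·κ < 0, no action x̄ ∈ [0, x_max] satisfies B(x̄, x_{−j}) ≥ 0 for all opponent profiles. -/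
open Finset Function

/-- Upper-bound lemma: for every own action and every opponent profile whose total
production equals `((N−1)/(χ+N−1))·(a−c)/b`, `B ≤ (χ−1)·κ`; hence if `(χ−1)·κ < 0`,
no action makes `B` nonnegative against all opponent profiles. -/
theorem cournot_B_upper_bound (N : ℕ) (hN : 2 ≤ N) (a b c xmax : ℝ)
    (hc : 0 < c) (hca : c < a) (hb : 0 < b) (hxmax : a / b ≤ xmax)
    (j : Fin N) (χ κ : ℝ) (hχ : 0 < χ) :
    (∀ x : Fin N → ℝ, (∀ k, x k ∈ Set.Icc (0 : ℝ) xmax) →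
      (∑ k ∈ Finset.univ.erase j, x k)
          = ((N : ℝ) - 1) / (χ + (N : ℝ) - 1) * ((a - c) / b) →
      cournotB N a b c χ κ j x ≤ (χ - 1) * κ) ∧
    ((χ - 1) * κ < 0 →
      ¬ ∃ xhi ∈ Set.Icc (0 : ℝ) xmax,
        ∀ x : Fin N → ℝ, (∀ k, x k ∈ Set.Icc (0 : ℝ) xmax) → x j = xhi →
          0 ≤ cournotB N a b c χ κ j x) := by

  have hN2 : (2:ℝ) ≤ (N:ℝ) := by exact_mod_cast hN
  have hN1 : (1:ℝ) ≤ (N:ℝ) - 1 := by linarith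
  have hN1' : ((N:ℝ) - 1) ≠ 0 := by linarith
  have hD : 0 < χ + (N:ℝ) - 1 := by linarith
  have hb' : b ≠ 0 := ne_of_gt hb
  have part1 : ∀ x : Fin N → ℝ, (∀ k, x k ∈ Set.Icc (0 : ℝ) xmax) →
      (∑ k ∈ Finset.univ.erase j, x k)
          = ((N : ℝ) - 1) / (χ + (N : ℝ) - 1) * ((a - c) / b) →
      cournotB N a b c χ κ j x ≤ (χ - 1) * κ := by
    intro x hx hsum
    unfold cournotB cournotPayoff
    set T := ∑ k, x k with hTdef
    set S := ((N : ℝ) - 1) / (χ + (N : ℝ) - 1) * ((a - c) / b) with hSdef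
    have hT : T = x j + S := by
      rw [hTdef, ← Finset.add_sum_erase Finset.univ x (Finset.mem_univ j), hsum]
    have hsplit : ∑ k ∈ Finset.univ.erase j, (max (a - b * T) 0 * x k - c * x k)
        = (max (a - b * T) 0 - c) * S := by
      rw [Finset.sum_sub_distrib, ← Finset.mul_sum, ← Finset.mul_sum, hsum]
      ring
    rw [hsplit]
    rcases le_or_gt (a - b * T) 0 with hp | hp
    · rw [max_eq_right hp]
      have hq : χ * (a - c) / (b * (χ + (N:ℝ) - 1)) ≤ x j := by
        rw [div_le_iff₀ (by positivity)]
        have h1 : a ≤ b * T := by linarith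
        rw [hT] at h1
        have h3 : (a - b * S) * (χ + (N:ℝ) - 1) ≤ b * x j * (χ + (N:ℝ) - 1) := by
          nlinarith
        have h4 : b * S * (χ + (N:ℝ) - 1) = ((N:ℝ) - 1) * (a - c) := by
          rw [hSdef]; field_simp
        nlinarith [mul_pos hχ hc, mul_pos (lt_of_lt_of_le one_pos hN1) hc]
      have hqS : χ / ((N:ℝ) - 1) * S = χ * (a - c) / (b * (χ + (N:ℝ) - 1)) := by
        rw [hSdef]; field_simp
      have : 0 * x j - c * x j - χ / ((N:ℝ) - 1) * ((0 - c) * S) ≤ 0 := by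
        have : χ / ((N:ℝ) - 1) * ((0 - c) * S)
            = -(c * (χ * (a - c) / (b * (χ + (N:ℝ) - 1)))) := by
          rw [← hqS]; ring
        rw [this]
        nlinarith [hc.le]
      linarith
    · rw [max_eq_left hp.le]
      set q := χ * (a - c) / (b * (χ + (N:ℝ) - 1)) with hqdef
      have key : (a - b * T) * x j - c * x j
          - χ / ((N:ℝ) - 1) * ((a - b * T - c) * S) = -(b * (x j - q)^2) := by
        rw [hT, hSdef, hqdef]
        field_simp
        ring
      have : -(b * (x j - q)^2) ≤ 0 := by nlinarith [sq_nonneg (x j - q)]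
      linarith
  refine ⟨part1, ?_⟩
  rintro hneg ⟨xhi, hxhi, hall⟩
  set v : ℝ := (a - c) / (b * (χ + (N:ℝ) - 1)) with hvdef
  have hv0 : 0 ≤ v := div_nonneg (by linarith) (by positivity)
  have hvmax : v ≤ xmax := by
    have h1 : v ≤ (a - c) / b := by
      apply div_le_div₀ (by linarith) le_rfl hb
      nlinarith
    have h2 : (a - c) / b ≤ a / b := (div_le_div_iff_of_pos_right hb).mpr (by linarith)
    linarith
  set x : Fin N → ℝ := fun k => if k = j then xhi else v with hxdef
  have hmem : ∀ k, x k ∈ Set.Icc (0 : ℝ) xmax := by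
    intro k
    by_cases hk : k = j
    · simp [hxdef, hk]; exact hxhi
    · simp [hxdef, hk]; exact ⟨hv0, hvmax⟩
  have hsum : (∑ k ∈ Finset.univ.erase j, x k)
      = ((N : ℝ) - 1) / (χ + (N : ℝ) - 1) * ((a - c) / b) := by
    have hconst : ∀ k ∈ Finset.univ.erase j, x k = v := by
      intro k hk
      simp [hxdef, Finset.ne_of_mem_erase hk]
    rw [Finset.sum_congr rfl hconst, Finset.sum_const, Finset.card_erase_of_mem
      (Finset.mem_univ j), Finset.card_univ, Fintype.card_fin, nsmul_eq_mul]
    have hcast : ((N - 1 : ℕ) : ℝ) = (N:ℝ) - 1 := by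
      have : 1 ≤ N := le_trans (by norm_num) hN
      push_cast [this]; ring
    rw [hcast, hvdef]
    rw [div_mul_div_comm, mul_div_assoc', mul_comm b (χ + (N:ℝ) - 1)]
  have h1 := part1 x hmem hsum
  have h2 := hall x hmem (by simp [hxdef])
  linarith
end

section
/- (Theorem 3: nonexistence for χ > 1 and κ ≥ 0.) In the N-player Cournot oligopoly game, fix a player j, χ > 1 and κ ≥ 0, and define B(x) = s_j(x) − (χ/(N−1))·∑_{k≠j} s_k(x) + (χ−1)·κ. Then for every action x_j ∈ [0, x_max] and the opponent profile in which every opponent produces x_max, B(x_j, x_{−j}) = −c·(x_j − χ·x_max) + (χ−1)·κ > 0. In particular, no action x̲ ∈ [0, x_max] satisfies B(x̲, x_{−j}) ≤ 0 for all opponent profiles x_{−j} ∈ [0, x_max]^{N−1}. -/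
open Finset Function

/-- Theorem 3, nonexistence for `χ > 1` and `κ ≥ 0`: against the opponent profile in
which every opponent produces `x_max`, `B = −c·(x_j − χ·x_max) + (χ−1)·κ > 0`; hence
no action makes `B` nonpositive against all opponent profiles. -/
theorem cournot_positively_correlated_nonexistence (N : ℕ) (hN : 2 ≤ N)
    (a b c xmax : ℝ) (hc : 0 < c) (hca : c < a) (hb : 0 < b) (hxmax : a / b ≤ xmax)
    (j : Fin N) (χ κ : ℝ) (hχ : 1 < χ) (hκ : 0 ≤ κ) :
    (∀ t ∈ Set.Icc (0 : ℝ) xmax,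
      cournotB N a b c χ κ j (Function.update (fun _ => xmax) j t)
          = -c * (t - χ * xmax) + (χ - 1) * κ ∧
        0 < cournotB N a b c χ κ j (Function.update (fun _ => xmax) j t)) ∧
    ¬ ∃ xlo ∈ Set.Icc (0 : ℝ) xmax,
      ∀ x : Fin N → ℝ, (∀ k, x k ∈ Set.Icc (0 : ℝ) xmax) → x j = xlo →
        cournotB N a b c χ κ j x ≤ 0 := by

  have hN1 : (0:ℝ) < (N:ℝ) - 1 := by
    have : (2:ℝ) ≤ (N:ℝ) := by exact_mod_cast hN
    linarith
  have hxpos : 0 < xmax := lt_of_lt_of_le (div_pos (hc.trans hca) hb) hxmax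
  have hax : a ≤ xmax * b := (div_le_iff₀ hb).mp hxmax
  have key : ∀ t ∈ Set.Icc (0:ℝ) xmax,
      cournotB N a b c χ κ j (Function.update (fun _ => xmax) j t)
        = -c * (t - χ * xmax) + (χ - 1) * κ := by
    intro t ht
    set x := Function.update (fun _ : Fin N => xmax) j t with hx
    have hxj : x j = t := Function.update_self _ _ _
    have hxk : ∀ k ∈ Finset.univ.erase j, x k = xmax := fun k hk =>
      Function.update_of_ne (Finset.ne_of_mem_erase hk) _ _
    have hcardR : ((Finset.univ.erase j).card : ℝ) = (N:ℝ) - 1 := by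
      rw [Finset.card_erase_of_mem (Finset.mem_univ j), Finset.card_univ, Fintype.card_fin,
        Nat.cast_sub (by omega : 1 ≤ N), Nat.cast_one]
    have hsum : ∑ k, x k = t + ((N:ℝ) - 1) * xmax := by
      rw [← Finset.add_sum_erase _ _ (Finset.mem_univ j), hxj,
          Finset.sum_congr rfl hxk, Finset.sum_const, nsmul_eq_mul, hcardR]
    have hmax : max (a - b * ∑ k, x k) 0 = 0 := by
      apply max_eq_right
      rw [hsum]
      have h2 : (2:ℝ) ≤ (N:ℝ) := by exact_mod_cast hN
      nlinarith [ht.1, hax, mul_nonneg hb.le ht.1,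
        mul_nonneg (mul_pos hb hxpos).le (by linarith : (0:ℝ) ≤ (N:ℝ) - 2)]
    have hpay : ∀ k, cournotPayoff N a b c x k = -(c * x k) := by
      intro k; unfold cournotPayoff; rw [hmax]; ring
    have hsum2 : ∑ k ∈ Finset.univ.erase j, cournotPayoff N a b c x k
        = ((N:ℝ) - 1) * (-(c * xmax)) := by
      rw [Finset.sum_congr rfl (fun k hk => by rw [hpay k, hxk k hk]),
        Finset.sum_const, nsmul_eq_mul, hcardR]
    unfold cournotB
    rw [hpay j, hxj, hsum2]
    field_simp
    ring
  have keypos : ∀ t ∈ Set.Icc (0:ℝ) xmax,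
      0 < cournotB N a b c χ κ j (Function.update (fun _ => xmax) j t) := by
    intro t ht
    rw [key t ht]
    nlinarith [mul_nonneg (sub_nonneg.2 hχ.le) hκ,
      mul_nonneg hc.le (sub_nonneg.2 ht.2),
      mul_pos (mul_pos hc (by linarith : (0:ℝ) < χ - 1)) hxpos]
  refine ⟨fun t ht => ⟨key t ht, keypos t ht⟩, ?_⟩
  rintro ⟨xlo, hlo, hall⟩
  have hmem : ∀ k, Function.update (fun _ : Fin N => xmax) j xlo k ∈ Set.Icc (0:ℝ) xmax := by
    intro k
    rcases eq_or_ne k j with rfl | hk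
    · rw [Function.update_self]; exact hlo
    · rw [Function.update_of_ne hk]; exact ⟨hxpos.le, le_refl _⟩
  have := hall _ hmem (Function.update_self _ _ _)
  exact absurd this (not_le.2 (keypos xlo hlo))
end

section
/- (Theorem 4: characterization of two-point negatively correlated autocratic strategies.) In the N-player Cournot oligopoly game, fix a player j, χ < 0 and κ with −c·x_max ≤ κ ≤ (a−c)²/(4b), and define B(x) = s_j(x) − (χ/(N−1))·∑_{k≠j} s_k(x) + (χ−1)·κ. Then there exist two actions x̲, x̄ ∈ [0, x_max] such that B(x̲, x_{−j}) ≤ 0 for every opponent profile x_{−j} ∈ [0, x_max]^{N−1} and B(x̄, x_{−j}) ≥ 0 for every opponent profile x_{−j} ∈ [0, x_max]^{N−1}, if and only if |χ| ≤ 1 and −c·x_max/(1+|χ|) ≤ κ ≤ −|χ|·c·x_max/(1+|χ|). -/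
open Finset Function

set_option maxHeartbeats 1000000

/-- Theorem 4: two-point negatively correlated autocratic strategies exist if and
only if `|χ| ≤ 1` and `−c·x_max/(1+|χ|) ≤ κ ≤ −|χ|·c·x_max/(1+|χ|)`. -/
theorem cournot_negatively_correlated_iff (N : ℕ) (hN : 2 ≤ N) (a b c xmax : ℝ)
    (hc : 0 < c) (hca : c < a) (hb : 0 < b) (hxmax : a / b ≤ xmax)
    (j : Fin N) (χ κ : ℝ) (hχ : χ < 0)
    (hκ1 : -c * xmax ≤ κ) (hκ2 : κ ≤ (a - c) ^ 2 / (4 * b)) :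
    (∃ xlo ∈ Set.Icc (0 : ℝ) xmax, ∃ xhi ∈ Set.Icc (0 : ℝ) xmax,
      (∀ x : Fin N → ℝ, (∀ k, x k ∈ Set.Icc (0 : ℝ) xmax) → x j = xlo →
        cournotB N a b c χ κ j x ≤ 0) ∧
      (∀ x : Fin N → ℝ, (∀ k, x k ∈ Set.Icc (0 : ℝ) xmax) → x j = xhi →
        0 ≤ cournotB N a b c χ κ j x)) ↔
    (|χ| ≤ 1 ∧ -c * xmax / (1 + |χ|) ≤ κ ∧ κ ≤ -|χ| * c * xmax / (1 + |χ|)) := by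
  have hNR : (2:ℝ) ≤ (N:ℝ) := by exact_mod_cast hN
  have hN1 : (1:ℝ) ≤ (N:ℝ) - 1 := by linarith
  have hN0 : (0:ℝ) < (N:ℝ) - 1 := by linarith
  have h1χ : (0:ℝ) < 1 - χ := by linarith
  have hxm : (0:ℝ) < xmax := lt_of_lt_of_le (div_pos (hc.trans hca) hb) hxmax
  have hax : a ≤ xmax * b := (div_le_iff₀ hb).1 hxmax
  have hcard : ((Finset.univ.erase j).card : ℝ) = (N:ℝ) - 1 := by
    rw [Finset.card_erase_of_mem (Finset.mem_univ j), card_univ, Fintype.card_fin,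
      Nat.cast_sub (by omega : 1 ≤ N)]
    simp
  rw [abs_of_neg hχ]
  have h1χ' : 1 + -χ = 1 - χ := by ring
  rw [h1χ']
  constructor
  · rintro ⟨xlo, hxlo, xhi, hxhi, hlo, hhi⟩
    -- low bound from xlo with all-zero opponents
    set x0 : Fin N → ℝ := fun k => if k = j then xlo else 0 with hx0
    have hsum0 : ∑ k, x0 k = xlo := by simp [hx0]
    have hset0 : ∑ k ∈ Finset.univ.erase j, cournotPayoff N a b c x0 k = 0 := by
      apply Finset.sum_eq_zero
      intro k hk
      have hkj : k ≠ j := (Finset.mem_erase.1 hk).1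
      simp [cournotPayoff, hx0, if_neg hkj]
    have hB0 : cournotB N a b c χ κ j x0 ≤ 0 := by
      apply hlo
      · intro k
        by_cases h : k = j
        · simp only [hx0]; rw [if_pos h]; exact hxlo
        · simp only [hx0]; rw [if_neg h]
          exact Set.mem_Icc.2 ⟨le_refl 0, hxm.le⟩
      · simp [hx0]
    rw [cournotB, cournotPayoff, hsum0, hset0] at hB0
    simp only [hx0, if_pos rfl] at hB0
    -- hB0 : max (a - b * xlo) 0 * xlo - c * xlo - χ/(N-1) * 0 + (χ-1)*κ ≤ 0
    have hlow : -(c * xmax) ≤ (1 - χ) * κ := by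
      have h1 : 0 ≤ max (a - b * xlo) 0 * xlo :=
        mul_nonneg (le_max_right _ _) hxlo.1
      nlinarith [hxlo.1, hxlo.2]
    -- high bound from xhi with all-xmax opponents
    set x1 : Fin N → ℝ := fun k => if k = j then xhi else xmax with hx1
    have hsum1 : ∑ k, x1 k = xhi + ((N:ℝ) - 1) * xmax := by
      rw [← Finset.add_sum_erase _ _ (Finset.mem_univ j)]
      have e1 : x1 j = xhi := by simp [hx1]
      have e2 : ∀ k ∈ Finset.univ.erase j, x1 k = xmax := by
        intro k hk
        simp only [hx1]
        rw [if_neg (Finset.mem_erase.1 hk).1]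
      rw [e1, Finset.sum_congr rfl e2, Finset.sum_const, nsmul_eq_mul, hcard]
    have hM1 : max (a - b * ∑ k, x1 k) 0 = 0 := by
      rw [hsum1]
      apply max_eq_right
      nlinarith [hxhi.1, mul_nonneg hb.le hxhi.1, mul_nonneg hb.le hxm.le]
    have hset1 : ∑ k ∈ Finset.univ.erase j, cournotPayoff N a b c x1 k
        = ((N:ℝ) - 1) * (-(c * xmax)) := by
      have e3 : ∀ k ∈ Finset.univ.erase j, cournotPayoff N a b c x1 k = -(c * xmax) := by
        intro k hk
        rw [cournotPayoff, hM1]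
        simp only [hx1]
        rw [if_neg (Finset.mem_erase.1 hk).1]
        ring
      rw [Finset.sum_congr rfl e3, Finset.sum_const, nsmul_eq_mul, hcard]
    have hB1 : 0 ≤ cournotB N a b c χ κ j x1 := by
      apply hhi
      · intro k
        by_cases h : k = j
        · simp only [hx1]; rw [if_pos h]; exact hxhi
        · simp only [hx1]; rw [if_neg h]
          exact Set.mem_Icc.2 ⟨hxm.le, le_refl xmax⟩
      · simp [hx1]
    rw [cournotB, cournotPayoff, hM1, hset1] at hB1
    simp only [hx1, if_pos rfl, zero_mul, zero_sub] at hB1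
    have hcancel : χ / ((N:ℝ) - 1) * (((N:ℝ) - 1) * (-(c * xmax))) = χ * (-(c * xmax)) := by
      field_simp
    rw [hcancel] at hB1
    -- hB1 : 0 ≤ -(c * xhi) - χ * (-(c*xmax)) + (χ-1)*κ
    have hhigh : (1 - χ) * κ ≤ χ * (c * xmax) := by
      nlinarith [hxhi.1]
    have hcx : 0 < c * xmax := mul_pos hc hxm
    have hcx' : (0:ℝ) < c * xmax := hcx
    refine ⟨by nlinarith [hlow, hhigh, hcx'], ?_, ?_⟩
    · rw [div_le_iff₀ h1χ]; nlinarith [hlow]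
    · rw [le_div_iff₀ h1χ]; nlinarith [hhigh]
  · rintro ⟨hχ1, hk1, hk2⟩
    rw [div_le_iff₀ h1χ] at hk1
    rw [le_div_iff₀ h1χ] at hk2
    -- hk1 : -c*xmax ≤ κ*(1-χ) ; hk2 : κ*(1-χ) ≤ -(-χ)*c*xmax
    refine ⟨xmax, ⟨hxm.le, le_refl _⟩, 0, ⟨le_refl _, hxm.le⟩, ?_, ?_⟩
    · intro x hx hxj
      have hsum : xmax ≤ ∑ k, x k := by
        rw [← Finset.add_sum_erase _ _ (Finset.mem_univ j), hxj]
        have : 0 ≤ ∑ k ∈ Finset.univ.erase j, x k :=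
          Finset.sum_nonneg (fun k _ => (hx k).1)
        linarith
      have hM : max (a - b * ∑ k, x k) 0 = 0 := by
        apply max_eq_right
        nlinarith [mul_le_mul_of_nonneg_left hsum hb.le]
      have hp : ∀ k, cournotPayoff N a b c x k = -(c * x k) := by
        intro k; rw [cournotPayoff, hM]; ring
      have hset : ∑ k ∈ Finset.univ.erase j, cournotPayoff N a b c x k
          = -(c * ∑ k ∈ Finset.univ.erase j, x k) := by
        rw [Finset.sum_congr rfl (fun k _ => hp k)]
        rw [Finset.mul_sum, ← Finset.sum_neg_distrib]
      rw [cournotB, hp j, hxj, hset]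
      have hY : 0 ≤ ∑ k ∈ Finset.univ.erase j, x k :=
        Finset.sum_nonneg (fun k _ => (hx k).1)
      have hD : χ / ((N:ℝ) - 1) ≤ 0 := div_nonpos_of_nonpos_of_nonneg hχ.le hN0.le
      nlinarith [mul_nonneg (neg_nonneg.2 hD) (mul_nonneg hc.le hY)]
    · intro x hx hxj
      have hpj : cournotPayoff N a b c x j = 0 := by
        rw [cournotPayoff, hxj]; ring
      have hM : 0 ≤ max (a - b * ∑ k, x k) 0 := le_max_right _ _
      have hbd : ∀ k ∈ Finset.univ.erase j, -(c * xmax) ≤ cournotPayoff N a b c x k := by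
        intro k _
        rw [cournotPayoff]
        have h1 : 0 ≤ max (a - b * ∑ k, x k) 0 * x k := mul_nonneg hM (hx k).1
        nlinarith [(hx k).1, (hx k).2]
      have hT : -(((N:ℝ) - 1) * (c * xmax)) ≤
          ∑ k ∈ Finset.univ.erase j, cournotPayoff N a b c x k := by
        calc -(((N:ℝ) - 1) * (c * xmax))
            = ∑ k ∈ Finset.univ.erase j, (-(c * xmax)) := by
              rw [Finset.sum_const, nsmul_eq_mul, hcard]; ring
          _ ≤ _ := Finset.sum_le_sum hbd
      rw [cournotB, hpj]
      have hE : 0 < -χ / ((N:ℝ) - 1) := div_pos (neg_pos.2 hχ) hN0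
      have hmul : (-χ / ((N:ℝ) - 1)) * (-(((N:ℝ) - 1) * (c * xmax)))
          ≤ (-χ / ((N:ℝ) - 1)) * ∑ k ∈ Finset.univ.erase j, cournotPayoff N a b c x k :=
        mul_le_mul_of_nonneg_left hT hE.le
      have hcancel : (-χ / ((N:ℝ) - 1)) * (-(((N:ℝ) - 1) * (c * xmax)))
          = χ * (c * xmax) := by
        field_simp
      rw [hcancel] at hmul
      rw [neg_div, neg_mul] at hmul
      nlinarith [hmul, hk2]
end

section
/- (Theorem 4: explicit construction.) In the N-player Cournot oligopoly game, fix a player j, χ < 0 with |χ| ≤ 1, and κ with −c·x_max/(1+|χ|) ≤ κ ≤ −|χ|·c·x_max/(1+|χ|), and define B(x) = s_j(x) − (χ/(N−1))·∑_{k≠j} s_k(x) + (χ−1)·κ. Then the actions x̄ = 0 and x̲ = x_max satisfy: B(0, x_{−j}) ≥ 0 for every opponent profile x_{−j} ∈ [0, x_max]^{N−1}, and B(x_max, x_{−j}) ≤ 0 for every opponent profile x_{−j} ∈ [0, x_max]^{N−1}. -/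
open Finset Function

/-- Theorem 4, explicit construction: for `χ < 0`, `|χ| ≤ 1` and
`−c·x_max/(1+|χ|) ≤ κ ≤ −|χ|·c·x_max/(1+|χ|)`, the actions `x̄ = 0` and `x̲ = x_max`
satisfy the required sign conditions for every opponent profile. -/
theorem cournot_negatively_correlated_construction (N : ℕ) (hN : 2 ≤ N)
    (a b c xmax : ℝ) (hc : 0 < c) (hca : c < a) (hb : 0 < b) (hxmax : a / b ≤ xmax)
    (j : Fin N) (χ κ : ℝ) (hχ : χ < 0) (hχ1 : |χ| ≤ 1)
    (hκ1 : -c * xmax / (1 + |χ|) ≤ κ) (hκ2 : κ ≤ -|χ| * c * xmax / (1 + |χ|)) :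
    (∀ x : Fin N → ℝ, (∀ k, x k ∈ Set.Icc (0 : ℝ) xmax) → x j = 0 →
      0 ≤ cournotB N a b c χ κ j x) ∧
    (∀ x : Fin N → ℝ, (∀ k, x k ∈ Set.Icc (0 : ℝ) xmax) → x j = xmax →
      cournotB N a b c χ κ j x ≤ 0) := by
  have hN2 : (2:ℝ) ≤ (N:ℝ) := by exact_mod_cast hN
  have hN1 : (0:ℝ) < (N:ℝ) - 1 := by linarith
  have habs : |χ| = -χ := abs_of_neg hχ
  have h1χ : (0:ℝ) < 1 + |χ| := by rw [habs]; linarith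
  have hxm : 0 < xmax := lt_of_lt_of_le (div_pos (lt_trans hc hca) hb) hxmax
  rw [div_le_iff₀ h1χ] at hκ1
  rw [le_div_iff₀ h1χ] at hκ2
  rw [habs] at hκ1 hκ2
  -- hκ1 : -c * xmax ≤ κ * (1 + -χ), hκ2 : κ * (1 + -χ) ≤ -(-χ) * c * xmax
  have hκA : -χ * (c * xmax) ≤ (χ - 1) * κ := by nlinarith
  have hκB : (χ - 1) * κ ≤ c * xmax := by nlinarith
  set d : ℝ := χ / ((N:ℝ) - 1) with hd
  have hd0 : d ≤ 0 := by
    rw [hd, div_nonpos_iff]; right; exact ⟨le_of_lt hχ, le_of_lt hN1⟩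
  have hdm : d * ((N:ℝ) - 1) = χ := div_mul_cancel₀ χ (ne_of_gt hN1)
  have hcard : ((Finset.univ.erase j).card : ℝ) = (N:ℝ) - 1 := by
    rw [Finset.card_erase_of_mem (Finset.mem_univ j)]
    simp [Fintype.card_fin]
    have : 1 ≤ N := by omega
    push_cast [Nat.cast_sub this]
    ring
  constructor
  · intro x hx hxj
    have hsj : cournotPayoff N a b c x j = 0 := by
      simp [cournotPayoff, hxj]
    have hlow : ∀ k ∈ Finset.univ.erase j, -(c * xmax) ≤ cournotPayoff N a b c x k := by
      intro k _
      have h1 : 0 ≤ max (a - b * ∑ k, x k) 0 * x k :=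
        mul_nonneg (le_max_right _ _) (hx k).1
      have h2 : c * x k ≤ c * xmax := mul_le_mul_of_nonneg_left (hx k).2 (le_of_lt hc)
      unfold cournotPayoff
      linarith
    have hsum : (((N:ℝ) - 1)) * (-(c * xmax)) ≤
        ∑ k ∈ Finset.univ.erase j, cournotPayoff N a b c x k := by
      calc ((N:ℝ) - 1) * (-(c * xmax))
          = ((Finset.univ.erase j).card : ℝ) * (-(c * xmax)) := by rw [hcard]
        _ = ∑ _k ∈ Finset.univ.erase j, (-(c * xmax)) := by
            rw [Finset.sum_const, nsmul_eq_mul]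
        _ ≤ _ := Finset.sum_le_sum hlow
    unfold cournotB
    rw [hsj]
    have hmul : d * (∑ k ∈ Finset.univ.erase j, cournotPayoff N a b c x k)
        ≤ d * (((N:ℝ) - 1) * (-(c * xmax))) := mul_le_mul_of_nonpos_left hsum hd0
    have : d * (((N:ℝ) - 1) * (-(c * xmax))) = -χ * (c * xmax) := by
      rw [← mul_assoc, hdm]; ring
    linarith
  · intro x hx hxj
    have hS : a - b * ∑ k, x k ≤ 0 := by
      have hle : x j ≤ ∑ k, x k :=
        Finset.single_le_sum (fun k _ => (hx k).1) (Finset.mem_univ j)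
      have : a ≤ b * xmax := by
        rw [div_le_iff₀ hb] at hxmax; linarith [hxmax]
      have hb' : b * xmax ≤ b * ∑ k, x k := by
        apply mul_le_mul_of_nonneg_left _ (le_of_lt hb)
        rw [← hxj]; exact hle
      linarith
    have hmax : max (a - b * ∑ k, x k) 0 = 0 := max_eq_right hS
    have hpay : ∀ k, cournotPayoff N a b c x k = -(c * x k) := by
      intro k; unfold cournotPayoff; rw [hmax]; ring
    have hsj : cournotPayoff N a b c x j = -(c * xmax) := by rw [hpay, hxj]
    have hsum : ∑ k ∈ Finset.univ.erase j, cournotPayoff N a b c x k ≤ 0 := by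
      apply Finset.sum_nonpos
      intro k _
      rw [hpay]
      exact neg_nonpos.mpr (mul_nonneg (le_of_lt hc) (hx k).1)
    have hmul : 0 ≤ d * (∑ k ∈ Finset.univ.erase j, cournotPayoff N a b c x k) := by
      nlinarith [hd0, hsum]
    unfold cournotB
    rw [hsj]
    linarith
end

section
/- (Theorem 4: nonexistence for κ above the admissible range.) In the N-player Cournot oligopoly game, fix a player j, χ < 0 and κ > −|χ|·c·x_max/(1+|χ|), and define B(x) = s_j(x) − (χ/(N−1))·∑_{k≠j} s_k(x) + (χ−1)·κ. Then for every action x_j ∈ [0, x_max] and the opponent profile in which every opponent produces x_max, B(x_j, x_{−j}) = −c·(x_j + |χ|·x_max) − (|χ|+1)·κ < 0. In particular, no action x̄ ∈ [0, x_max] satisfies B(x̄, x_{−j}) ≥ 0 for all opponent profiles x_{−j} ∈ [0, x_max]^{N−1}. -/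
open Finset Function

/-- Theorem 4, nonexistence for `κ > −|χ|·c·x_max/(1+|χ|)`: against the opponent
profile in which every opponent produces `x_max`,
`B = −c·(x_j + |χ|·x_max) − (|χ|+1)·κ < 0`; hence no action makes `B` nonnegative
against all opponent profiles. -/
theorem cournot_negatively_correlated_nonexistence_large_kappa (N : ℕ) (hN : 2 ≤ N)
    (a b c xmax : ℝ) (hc : 0 < c) (hca : c < a) (hb : 0 < b) (hxmax : a / b ≤ xmax)
    (j : Fin N) (χ κ : ℝ) (hχ : χ < 0) (hκ : -|χ| * c * xmax / (1 + |χ|) < κ) :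
    (∀ t ∈ Set.Icc (0 : ℝ) xmax,
      cournotB N a b c χ κ j (Function.update (fun _ => xmax) j t)
          = -c * (t + |χ| * xmax) - (|χ| + 1) * κ ∧
        cournotB N a b c χ κ j (Function.update (fun _ => xmax) j t) < 0) ∧
    ¬ ∃ xhi ∈ Set.Icc (0 : ℝ) xmax,
      ∀ x : Fin N → ℝ, (∀ k, x k ∈ Set.Icc (0 : ℝ) xmax) → x j = xhi →
        0 ≤ cournotB N a b c χ κ j x := by
  have ha : 0 < a := hc.trans hca
  have hxmax0 : 0 < xmax := lt_of_lt_of_le (div_pos ha hb) hxmax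
  have hbxmax : a ≤ b * xmax := by rw [div_le_iff₀ hb] at hxmax; linarith
  have hN2 : (2 : ℝ) ≤ (N : ℝ) := by exact_mod_cast hN
  have hN1 : ((N : ℝ) - 1) ≠ 0 := by linarith
  have habs : |χ| = -χ := abs_of_neg hχ
  have habs1 : (0 : ℝ) < 1 + |χ| := by positivity
  have key : ∀ t ∈ Set.Icc (0 : ℝ) xmax,
      cournotB N a b c χ κ j (Function.update (fun _ => xmax) j t)
          = -c * (t + |χ| * xmax) - (|χ| + 1) * κ ∧
        cournotB N a b c χ κ j (Function.update (fun _ => xmax) j t) < 0 := by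
    intro t ht
    obtain ⟨ht0, htmax⟩ := ht
    set x : Fin N → ℝ := Function.update (fun _ => xmax) j t with hx
    have hsum : ∑ k, x k = t + ((N : ℝ) - 1) * xmax := by
      rw [hx, Finset.sum_update_of_mem (mem_univ j), Finset.sdiff_singleton_eq_erase]
      rw [Finset.sum_const, Finset.card_erase_of_mem (mem_univ j), card_univ,
        Fintype.card_fin, nsmul_eq_mul]
      have : ((N - 1 : ℕ) : ℝ) = (N : ℝ) - 1 := by
        have : 1 ≤ N := by omega
        push_cast [this]; ring
      rw [this]
    have hmax : max (a - b * ∑ k, x k) 0 = 0 := by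
      apply max_eq_right
      rw [hsum]
      nlinarith
    have hpj : cournotPayoff N a b c x j = -c * t := by
      rw [cournotPayoff, hmax, hx, Function.update_self]; ring
    have hps : ∑ k ∈ Finset.univ.erase j, cournotPayoff N a b c x k
        = ((N : ℝ) - 1) * (-c * xmax) := by
      have : ∀ k ∈ Finset.univ.erase j, cournotPayoff N a b c x k = -c * xmax := by
        intro k hk
        have hkj : k ≠ j := (Finset.mem_erase.mp hk).1
        rw [cournotPayoff, hmax, hx, Function.update_of_ne hkj]; ring
      rw [Finset.sum_congr rfl this, Finset.sum_const,
        Finset.card_erase_of_mem (mem_univ j), card_univ, Fintype.card_fin, nsmul_eq_mul]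
      congr 1
      have : 1 ≤ N := by omega
      push_cast [this]; ring
    have heq : cournotB N a b c χ κ j x = -c * (t + |χ| * xmax) - (|χ| + 1) * κ := by
      rw [cournotB, hpj, hps, habs]
      field_simp
      ring
    refine ⟨heq, ?_⟩
    rw [heq]
    have hκ' : -|χ| * c * xmax < κ * (1 + |χ|) := (div_lt_iff₀ habs1).mp hκ
    nlinarith [abs_nonneg χ, mul_nonneg hc.le ht0]
  refine ⟨key, ?_⟩
  rintro ⟨xhi, hxhi, hall⟩
  have hlt := (key xhi hxhi).2
  have := hall (Function.update (fun _ => xmax) j xhi)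
    (fun k => ?_) (by simp)
  · linarith
  · by_cases hk : k = j
    · subst hk; simpa using hxhi
    · rw [Function.update_of_ne hk]
      exact ⟨hxmax0.le, le_refl _⟩
end

section
/- (Theorem 4: nonexistence for |χ| > 1.) In the N-player Cournot oligopoly game, fix a player j, χ < 0 with |χ| > 1, and κ with −c·x_max ≤ κ ≤ −|χ|·c·x_max/(1+|χ|), and define B(x) = s_j(x) − (χ/(N−1))·∑_{k≠j} s_k(x) + (χ−1)·κ. Then for every action x_j ∈ [0, x_max] and the opponent profile in which every opponent produces 0, B(x_j, x_{−j}) = (max(a − b·x_j, 0) − c)·x_j + (|χ|+1)·|κ| > 0. In particular, no action x̲ ∈ [0, x_max] satisfies B(x̲, x_{−j}) ≤ 0 for all opponent profiles x_{−j} ∈ [0, x_max]^{N−1}. -/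
open Finset Function

/-- Theorem 4, nonexistence for `|χ| > 1`: against the opponent profile in which every
opponent produces `0`, `B = (max(a − b·x_j, 0) − c)·x_j + (|χ|+1)·|κ| > 0`; hence no
action makes `B` nonpositive against all opponent profiles. -/
theorem cournot_negatively_correlated_nonexistence_large_chi (N : ℕ) (hN : 2 ≤ N)
    (a b c xmax : ℝ) (hc : 0 < c) (hca : c < a) (hb : 0 < b) (hxmax : a / b ≤ xmax)
    (j : Fin N) (χ κ : ℝ) (hχ : χ < 0) (hχ1 : 1 < |χ|)
    (hκ1 : -c * xmax ≤ κ) (hκ2 : κ ≤ -|χ| * c * xmax / (1 + |χ|)) :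
    (∀ t ∈ Set.Icc (0 : ℝ) xmax,
      cournotB N a b c χ κ j (Function.update (fun _ => (0 : ℝ)) j t)
          = (max (a - b * t) 0 - c) * t + (|χ| + 1) * |κ| ∧
        0 < cournotB N a b c χ κ j (Function.update (fun _ => (0 : ℝ)) j t)) ∧
    ¬ ∃ xlo ∈ Set.Icc (0 : ℝ) xmax,
      ∀ x : Fin N → ℝ, (∀ k, x k ∈ Set.Icc (0 : ℝ) xmax) → x j = xlo →
        cournotB N a b c χ κ j x ≤ 0 := by
  have ha : 0 < a := hc.trans hca
  have hxm0 : 0 < xmax := lt_of_lt_of_le (div_pos ha hb) hxmax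
  have hχa : |χ| = -χ := abs_of_neg hχ
  have h1χ : (0 : ℝ) < 1 + |χ| := by positivity
  have hκneg : κ < 0 := by
    refine lt_of_le_of_lt hκ2 (div_neg_of_neg_of_pos ?_ h1χ)
    nlinarith [mul_pos hc hxm0]
  have hκa : |κ| = -κ := abs_of_neg hκneg
  have hmul : κ * (1 + |χ|) ≤ -|χ| * c * xmax := (le_div_iff₀ h1χ).mp hκ2
  have hcx : 0 < c * xmax := mul_pos hc hxm0
  have key : ∀ t ∈ Set.Icc (0 : ℝ) xmax,
      cournotB N a b c χ κ j (Function.update (fun _ => (0 : ℝ)) j t)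
        = (max (a - b * t) 0 - c) * t + (|χ| + 1) * |κ| := by
    intro t ht
    have hsum : ∑ k, Function.update (fun _ => (0 : ℝ)) j t k = t := by
      simp [Function.update_apply]
    have herase : ∑ k ∈ Finset.univ.erase j,
        cournotPayoff N a b c (Function.update (fun _ => (0 : ℝ)) j t) k = 0 := by
      refine Finset.sum_eq_zero fun k hk => ?_
      have hkj : k ≠ j := Finset.ne_of_mem_erase hk
      simp [cournotPayoff, Function.update_apply, hkj]
    unfold cournotB
    rw [herase, mul_zero, sub_zero]
    unfold cournotPayoff
    rw [hsum, Function.update_self, hχa, hκa]; ring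
  have pos : ∀ t ∈ Set.Icc (0 : ℝ) xmax,
      0 < (max (a - b * t) 0 - c) * t + (|χ| + 1) * |κ| := by
    intro t ht
    obtain ⟨ht0, htm⟩ := ht
    have hmax : (0 : ℝ) ≤ max (a - b * t) 0 := le_max_right _ _
    have h1 : -(c * xmax) ≤ (max (a - b * t) 0 - c) * t := by nlinarith
    have h2 : c * xmax < (|χ| + 1) * |κ| := by
      rw [hκa]; nlinarith
    linarith
  refine ⟨fun t ht => ⟨key t ht, by rw [key t ht]; exact pos t ht⟩, ?_⟩
  rintro ⟨xlo, hxlo, hall⟩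
  have hx : ∀ k, Function.update (fun _ => (0 : ℝ)) j xlo k ∈ Set.Icc (0 : ℝ) xmax := by
    intro k
    rcases eq_or_ne k j with rfl | h
    · simpa using hxlo
    · simp [Function.update_apply, h, Set.mem_Icc, hxm0.le]
  have hB := hall _ hx (by simp)
  have := pos xlo hxlo
  rw [key xlo hxlo] at hB
  linarith
end
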